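/- Let A be a finite-dimensional local algebra over a field E with residue field E and maximal ideal n. Then any 𝒪-submodule n' of n of finite type over a complete DVR 𝒪 ⊆ E with n' ⊗_𝒪 E = n generates an 𝒪-subalgebra A' = 𝒪 ⊕ (ideal generated by n') ⊆ A that is a finite 𝒪-module with A' ⊗_𝒪 E ≅ A; conversely any 𝒪-subalgebra A' ⊆ A finite over 𝒪 with A' ⊗_𝒪 E ≅ A has the form 𝒪 ⊕ n' with n' = A' ∩ n an 𝒪-lattice in n. -/

import Mathlib

/-!
The maximal ideal `n` of the Artinian local ring `A` is nil, so its elements are integral over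
`𝒪` and a finitely generated `𝒪`-submodule of `n` generates a finite `𝒪`-algebra. Since the
residue field is `E`, the space `A` is `E·1 ⊕ n`. Conversely, the residue of an element of a
finite `𝒪`-subalgebra `A'` is integral over `𝒪`, hence lies in `𝒪` as `𝒪` is integrally closed;
this splits `A'` as `𝒪 ⊕ (A' ∩ n)`, and the modular law for `E`-subspaces, with
`E·1 ∩ n = 0`, shows that `A' ∩ n` spans `n`.
-/

open IsLocalRing Submodule

theorem IsNilpotent.isIntegral {R B : Type*} [CommRing R] [Ring B] [Algebra R B] {x : B}
    (hx : IsNilpotent x) : IsIntegral R x := by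
  obtain ⟨n, hn⟩ := hx
  exact ⟨Polynomial.X ^ n, Polynomial.monic_X_pow n, by simp [hn]⟩

theorem Algebra.finite_adjoin_of_fg_of_isIntegral {R A : Type*} [CommRing R] [CommRing A]
    [Algebra R A] {M : Submodule R A} (hM : M.FG) (hint : ∀ x ∈ M, IsIntegral R x) :
    Module.Finite R (Algebra.adjoin R (M : Set A)) := by
  obtain ⟨s, rfl⟩ := hM
  rw [Algebra.adjoin_span]
  exact Algebra.finite_adjoin_of_finite_of_isIntegral s.finite_toSet
    fun x hx => hint x (subset_span hx)

section ResidueField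

variable {E A : Type*} [Field E] [CommRing A] [IsLocalRing A] [Algebra E A]

theorem algebraMap_mem_maximalIdeal_iff {e : E} :
    algebraMap E A e ∈ maximalIdeal A ↔ e = 0 := by
  refine ⟨fun he => by_contra fun hne => he ((IsUnit.mk0 e hne).map _), ?_⟩
  rintro rfl
  simp

theorem disjoint_maximalIdeal_one :
    Disjoint ((maximalIdeal A).restrictScalars E) (1 : Submodule E A) := by
  rw [disjoint_def]
  intro x hx hx1
  obtain ⟨e, rfl⟩ := mem_one.mp hx1
  simp [algebraMap_mem_maximalIdeal_iff.mp hx]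

theorem eq_maximalIdeal_of_le_of_sup_one_eq_top {L : Submodule E A}
    (hL : L ≤ (maximalIdeal A).restrictScalars E) (htop : L ⊔ 1 = ⊤) :
    L = (maximalIdeal A).restrictScalars E :=
  calc L = L ⊔ 1 ⊓ (maximalIdeal A).restrictScalars E := by
        rw [disjoint_iff.mp disjoint_maximalIdeal_one.symm, sup_bot_eq]
    _ = (L ⊔ 1) ⊓ (maximalIdeal A).restrictScalars E := (sup_inf_assoc_of_le 1 hL).symm
    _ = (maximalIdeal A).restrictScalars E := by rw [htop, top_inf_eq]

theorem maximalIdeal_sup_one_eq_top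
    (hres : Function.Surjective ((residue A).comp (algebraMap E A))) :
    (maximalIdeal A).restrictScalars E ⊔ 1 = ⊤ := by
  refine eq_top_iff.mpr fun a _ => ?_
  obtain ⟨e, he⟩ := hres (residue A a)
  exact mem_sup.mpr ⟨_, Ideal.Quotient.eq.mp he.symm, _, algebraMap_mem e, sub_add_cancel a _⟩

theorem eq_top_of_maximalIdeal_le_of_one_mem
    (hres : Function.Surjective ((residue A).comp (algebraMap E A))) {L : Submodule E A}
    (hL : (maximalIdeal A).restrictScalars E ≤ L) (h1 : (1 : A) ∈ L) : L = ⊤ :=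
  eq_top_iff.mpr ((maximalIdeal_sup_one_eq_top hres).ge.trans (sup_le hL (one_le.mpr h1)))

theorem exists_sub_algebraMap_mem_maximalIdeal_of_isIntegral {𝒪 : Type*} [CommRing 𝒪]
    [IsIntegrallyClosed 𝒪] [Algebra 𝒪 E] [IsFractionRing 𝒪 E] [Algebra 𝒪 A]
    [IsScalarTower 𝒪 E A] (hres : Function.Surjective ((residue A).comp (algebraMap E A)))
    {x : A} (hx : IsIntegral 𝒪 x) : ∃ c : 𝒪, x - algebraMap 𝒪 A c ∈ maximalIdeal A := by
  obtain ⟨e, he⟩ := hres (residue A x)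
  have he_int : IsIntegral 𝒪 e := by
    refine (isIntegral_algHom_iff (IsScalarTower.toAlgHom 𝒪 E (ResidueField A))
      (algebraMap E (ResidueField A)).injective).mp ?_
    convert hx.map (IsScalarTower.toAlgHom 𝒪 A (ResidueField A))
    exact he
  obtain ⟨c, rfl⟩ := IsIntegrallyClosed.isIntegral_iff.mp he_int
  refine ⟨c, ?_⟩
  rw [IsScalarTower.algebraMap_apply 𝒪 E A]
  exact Ideal.Quotient.eq.mp he.symm

end ResidueField

theorem stmt_14_general (𝒪 E A : Type) [CommRing 𝒪] [IsDomain 𝒪] [IsDiscreteValuationRing 𝒪]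
    [Field E] [Algebra 𝒪 E] [IsFractionRing 𝒪 E]
    [CommRing A] [IsLocalRing A] [IsArtinianRing A]
    [Algebra E A] [Algebra 𝒪 A] [IsScalarTower 𝒪 E A]
    (hres : Function.Bijective ((residue A).comp (algebraMap E A))) :
    -- forward direction
    (∀ n' : Submodule 𝒪 A, (n' : Set A) ⊆ (maximalIdeal A : Set A) → n'.FG →
      Submodule.span E (n' : Set A) = Submodule.restrictScalars E (maximalIdeal A) →
      (Module.Finite 𝒪 (Algebra.adjoin 𝒪 (n' : Set A)) ∧
        Submodule.span E ((Algebra.adjoin 𝒪 (n' : Set A) : Subalgebra 𝒪 A) : Set A) = ⊤)) ∧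
    -- converse direction
    (∀ A' : Subalgebra 𝒪 A, Module.Finite 𝒪 A' →
      Submodule.span E (A' : Set A) = ⊤ →
      ((A'.toSubmodule ⊓ Submodule.restrictScalars 𝒪 (maximalIdeal A)).FG ∧
       Submodule.span E
         ((A'.toSubmodule ⊓ Submodule.restrictScalars 𝒪 (maximalIdeal A) : Submodule 𝒪 A) : Set A)
         = Submodule.restrictScalars E (maximalIdeal A) ∧
       (∀ x ∈ A', ∃ c : 𝒪,
          x - algebraMap 𝒪 A c ∈ A'.toSubmodule ⊓ Submodule.restrictScalars 𝒪 (maximalIdeal A)) ∧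
       (∀ c : 𝒪, algebraMap 𝒪 A c ∈
          A'.toSubmodule ⊓ Submodule.restrictScalars 𝒪 (maximalIdeal A) → c = 0))) := by
  refine ⟨fun n' hn' hfg hspan => ⟨?_, ?_⟩, fun A' hfin hspan => ?_⟩
  · exact Algebra.finite_adjoin_of_fg_of_isIntegral hfg fun x hx =>
      (Ring.KrullDimLE.isNilpotent_iff_mem_maximalIdeal.mpr (hn' hx)).isIntegral
  · refine eq_top_of_maximalIdeal_le_of_one_mem hres.surjective ?_ (subset_span (one_mem _))
    exact hspan ▸ span_mono Algebra.subset_adjoin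
  set N := A'.toSubmodule ⊓ (maximalIdeal A).restrictScalars 𝒪
  have hdecomp : ∀ x ∈ A', ∃ c : 𝒪, x - algebraMap 𝒪 A c ∈ N := by
    intro x hx
    have hint : IsIntegral 𝒪 x := (Algebra.IsIntegral.isIntegral (⟨x, hx⟩ : A')).map A'.val
    obtain ⟨c, hc⟩ := exists_sub_algebraMap_mem_maximalIdeal_of_isIntegral hres.surjective hint
    exact ⟨c, sub_mem hx (A'.algebraMap_mem c), hc⟩
  have hsup : span E (N : Set A) ⊔ 1 = ⊤ := by
    refine eq_top_iff.mpr (hspan ▸ span_le.mpr fun x hx => ?_)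
    obtain ⟨c, hc⟩ := hdecomp x hx
    refine mem_sup.mpr ⟨_, subset_span hc, _, ?_, sub_add_cancel x _⟩
    exact IsScalarTower.algebraMap_apply 𝒪 E A c ▸ algebraMap_mem _
  refine ⟨(Module.Finite.iff_fg.mp hfin).of_le inf_le_left,
    eq_maximalIdeal_of_le_of_sup_one_eq_top (span_le.mpr fun x hx => hx.2) hsup, hdecomp,
    fun c hc => ?_⟩
  have hc_max : algebraMap 𝒪 A c ∈ maximalIdeal A := hc.2
  rw [IsScalarTower.algebraMap_apply 𝒪 E A, algebraMap_mem_maximalIdeal_iff] at hc_max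
  exact (IsFractionRing.to_map_eq_zero_iff).mp hc_max

theorem stmt_14 (𝒪 E A : Type) [CommRing 𝒪] [IsDomain 𝒪] [IsDiscreteValuationRing 𝒪]
    [IsAdicComplete (maximalIdeal 𝒪) 𝒪]
    [Field E] [Algebra 𝒪 E] [IsFractionRing 𝒪 E]
    [CommRing A] [IsLocalRing A] [IsArtinianRing A]
    [Algebra E A] [Algebra 𝒪 A] [IsScalarTower 𝒪 E A]
    (hres : Function.Bijective ((residue A).comp (algebraMap E A))) :
    -- forward direction
    (∀ n' : Submodule 𝒪 A, (n' : Set A) ⊆ (maximalIdeal A : Set A) → n'.FG →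
      Submodule.span E (n' : Set A) = Submodule.restrictScalars E (maximalIdeal A) →
      (Module.Finite 𝒪 (Algebra.adjoin 𝒪 (n' : Set A)) ∧
        Submodule.span E ((Algebra.adjoin 𝒪 (n' : Set A) : Subalgebra 𝒪 A) : Set A) = ⊤)) ∧
    -- converse direction
    (∀ A' : Subalgebra 𝒪 A, Module.Finite 𝒪 A' →
      Submodule.span E (A' : Set A) = ⊤ →
      ((A'.toSubmodule ⊓ Submodule.restrictScalars 𝒪 (maximalIdeal A)).FG ∧
       Submodule.span E
         ((A'.toSubmodule ⊓ Submodule.restrictScalars 𝒪 (maximalIdeal A) : Submodule 𝒪 A) : Set A)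
         = Submodule.restrictScalars E (maximalIdeal A) ∧
       (∀ x ∈ A', ∃ c : 𝒪,
          x - algebraMap 𝒪 A c ∈ A'.toSubmodule ⊓ Submodule.restrictScalars 𝒪 (maximalIdeal A)) ∧
       (∀ c : 𝒪, algebraMap 𝒪 A c ∈
          A'.toSubmodule ⊓ Submodule.restrictScalars 𝒪 (maximalIdeal A) → c = 0))) :=
  stmt_14_general 𝒪 E A hres
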